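/- For all y ≥ 0, the Gaussian tail satisfies √(2/π) · e^{-y²/2}/(y + √(y²+4)) < (1/√(2π)) ∫_y^∞ e^{-u²/2} du ≤ √(2/π) · e^{-y²/2}/(y + √(y²+8/π)). -/

import Mathlib

/-!
With `R_c(u) = 2 / (u + √(u² + c))` one has `R_c' = -R_c / √(u² + c)`, so
`-(e^{-u²/2} R_c)' - e^{-u²/2}` is `e^{-u²/2}` times a positive factor times
`u √(u² + c) - (u² + c - 2)`, whose sign is that of `(4 - c) u² - (c - 2)²`. Integrating over
`(y, ∞)` writes `e^{-y²/2} R_c(y) - ∫_y^∞ e^{-u²/2}` as the integral of this defect. For `c = 4`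
the defect is negative everywhere. For `c = 8/π` it changes sign once, from negative to positive,
and its integral over `(0, ∞)` vanishes because `R_{8/π}(0) = √(π/2) = ∫_0^∞ e^{-u²/2}`; hence all
its tail integrals are nonnegative.
-/

open Real MeasureTheory Set Filter Topology

noncomputable def tailApprox (c u : ℝ) : ℝ := 2 / (u + √(u ^ 2 + c))

noncomputable def tailApproxDefect (c u : ℝ) : ℝ :=
  exp (-u ^ 2 / 2) * (u * √(u ^ 2 + c) - (u ^ 2 + c - 2)) / (√(u ^ 2 + c) * (u + √(u ^ 2 + c)))

lemma tendsto_exp_neg_sq_div_two_atTop :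
    Tendsto (fun u : ℝ => exp (-u ^ 2 / 2)) atTop (𝓝 0) := by
  have h : Tendsto (fun u : ℝ => -(u ^ 2 / 2)) atTop atBot :=
    tendsto_neg_atTop_atBot.comp ((tendsto_pow_atTop two_ne_zero).atTop_div_const two_pos)
  simpa only [neg_div, Function.comp_def] using tendsto_exp_atBot.comp h

lemma tendsto_tailApprox_atTop (c : ℝ) : Tendsto (tailApprox c) atTop (𝓝 0) :=
  tendsto_const_nhds.div_atTop <|
    tendsto_atTop_mono (fun _ => le_add_of_nonneg_right (sqrt_nonneg _)) tendsto_id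

lemma tendsto_neg_exp_mul_tailApprox_atTop (c : ℝ) :
    Tendsto (fun u => -(exp (-u ^ 2 / 2) * tailApprox c u)) atTop (𝓝 0) := by
  simpa using (tendsto_exp_neg_sq_div_two_atTop.mul (tendsto_tailApprox_atTop c)).neg

lemma exp_neg_sq_div_two_eq :
    (fun u : ℝ => exp (-u ^ 2 / 2)) = fun u => exp (-(1 / 2) * u ^ 2) := by
  ext u
  ring_nf

lemma integrableOn_exp_neg_sq_div_two (s : Set ℝ) :
    IntegrableOn (fun u : ℝ => exp (-u ^ 2 / 2)) s := by
  rw [exp_neg_sq_div_two_eq]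
  exact (integrable_exp_neg_mul_sq one_half_pos).integrableOn

lemma integral_Ioi_zero_exp_neg_sq_div_two :
    ∫ u in Ioi (0 : ℝ), exp (-u ^ 2 / 2) = √(2 * π) / 2 := by
  rw [exp_neg_sq_div_two_eq, integral_gaussian_Ioi, div_div_eq_mul_div, div_one, mul_comm]

lemma setIntegral_Ioi_neg {f : ℝ → ℝ} {y : ℝ} (hf : IntegrableOn f (Ioi y))
    (hneg : ∀ x ∈ Ioi y, f x < 0) : ∫ x in Ioi y, f x < 0 := by
  have hpos : 0 < ∫ x in Ioi y, (-f) x := by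
    rw [setIntegral_pos_iff_support_of_nonneg_ae _ hf.neg]
    · have hsupp : Ioi y ⊆ Function.support (-f) := fun x hx =>
        Function.mem_support.2 (neg_pos.2 (hneg x hx)).ne'
      rw [inter_eq_right.2 hsupp, volume_Ioi]
      exact ENNReal.zero_lt_top
    · filter_upwards [ae_restrict_mem measurableSet_Ioi] with x hx
      exact (neg_pos.2 (hneg x hx)).le
  simpa only [Pi.neg_apply, integral_neg, neg_pos] using hpos

lemma setIntegral_Ioi_nonneg_of_sign_change {f : ℝ → ℝ} {a b y : ℝ}
    (hf : IntegrableOn f (Ioi b)) (hzero : ∫ x in Ioi b, f x = 0)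
    (hneg : ∀ x ∈ Ioc b a, f x ≤ 0) (hpos : ∀ x ∈ Ioi a, 0 ≤ f x) (hby : b ≤ y) :
    0 ≤ ∫ x in Ioi y, f x := by
  rcases le_total a y with hay | hya
  · exact setIntegral_nonneg measurableSet_Ioi fun x hx => hpos x (hay.trans_lt hx)
  have hsplit : (∫ x in Ioc b y, f x) + ∫ x in Ioi y, f x = 0 := by
    rw [← setIntegral_union Ioc_disjoint_Ioi_same measurableSet_Ioi
      (hf.mono_set Ioc_subset_Ioi_self) (hf.mono_set (Ioi_subset_Ioi hby)),
      Ioc_union_Ioi_eq_Ioi hby, hzero]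
  have hhead : ∫ x in Ioc b y, f x ≤ 0 :=
    setIntegral_nonpos measurableSet_Ioc fun x hx => hneg x ⟨hx.1, hx.2.trans hya⟩
  linarith

section TailApprox

variable {c : ℝ}

lemma sqrt_sq_add_pos (hc : 0 < c) (u : ℝ) : 0 < √(u ^ 2 + c) :=
  Real.sqrt_pos.2 (by positivity)

lemma sq_sqrt_sq_add (hc : 0 ≤ c) (u : ℝ) : √(u ^ 2 + c) ^ 2 = u ^ 2 + c :=
  Real.sq_sqrt (by positivity)

lemma add_sqrt_sq_add_pos (hc : 0 < c) (u : ℝ) : 0 < u + √(u ^ 2 + c) := by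
  have : |u| < √(u ^ 2 + c) := (lt_sqrt (abs_nonneg u)).2 (by rw [sq_abs]; linarith)
  linarith [neg_abs_le u]

lemma hasDerivAt_tailApprox (hc : 0 < c) (u : ℝ) :
    HasDerivAt (tailApprox c) (-tailApprox c u / √(u ^ 2 + c)) u := by
  have hs := sqrt_sq_add_pos hc u
  have hd := add_sqrt_sq_add_pos hc u
  have hsqrt : HasDerivAt (fun u => √(u ^ 2 + c)) (u / √(u ^ 2 + c)) u := by
    convert ((hasDerivAt_pow 2 u).add_const c).sqrt (by positivity) using 1
    simp only [Nat.cast_ofNat, pow_one, Nat.add_one_sub_one]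
    field_simp
  have hden : HasDerivAt (fun u => u + √(u ^ 2 + c)) (1 + u / √(u ^ 2 + c)) u :=
    (hasDerivAt_id' u).add hsqrt
  refine ((hasDerivAt_const u (2 : ℝ)).div hden hd.ne').congr_deriv ?_
  unfold tailApprox
  field_simp
  ring

lemma hasDerivAt_neg_exp_mul_tailApprox (hc : 0 < c) (u : ℝ) :
    HasDerivAt (fun u => -(exp (-u ^ 2 / 2) * tailApprox c u))
      (exp (-u ^ 2 / 2) * tailApprox c u * (u + (√(u ^ 2 + c))⁻¹)) u := by
  have hsq : HasDerivAt (fun u : ℝ => -u ^ 2 / 2) (-u) u := by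
    exact ((hasDerivAt_pow 2 u).neg.div_const 2).congr_deriv
      (by simp only [Nat.cast_ofNat, pow_one, Nat.add_one_sub_one]; ring)
  refine (hsq.exp.mul (hasDerivAt_tailApprox hc u)).neg.congr_deriv ?_
  field_simp
  ring

lemma tailApproxDefect_eq (hc : 0 < c) (u : ℝ) :
    tailApproxDefect c u =
      exp (-u ^ 2 / 2) * tailApprox c u * (u + (√(u ^ 2 + c))⁻¹) - exp (-u ^ 2 / 2) := by
  have hs := (sqrt_sq_add_pos hc u).ne'
  have hd := (add_sqrt_sq_add_pos hc u).ne'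
  unfold tailApproxDefect tailApprox
  field_simp
  linear_combination sq_sqrt_sq_add hc.le u

lemma exp_mul_tailApprox_mul_nonneg {u : ℝ} (hu : 0 ≤ u) :
    0 ≤ exp (-u ^ 2 / 2) * tailApprox c u * (u + (√(u ^ 2 + c))⁻¹) := by
  unfold tailApprox
  positivity

lemma integrableOn_exp_mul_tailApprox_mul (hc : 0 < c) {y : ℝ} (hy : 0 ≤ y) :
    IntegrableOn (fun u => exp (-u ^ 2 / 2) * tailApprox c u * (u + (√(u ^ 2 + c))⁻¹))
      (Ioi y) :=
  integrableOn_Ioi_deriv_of_nonneg' (fun u _ => hasDerivAt_neg_exp_mul_tailApprox hc u)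
    (fun _ hu => exp_mul_tailApprox_mul_nonneg (hy.trans hu.out.le))
    (tendsto_neg_exp_mul_tailApprox_atTop c)

lemma integrableOn_tailApproxDefect (hc : 0 < c) {y : ℝ} (hy : 0 ≤ y) :
    IntegrableOn (tailApproxDefect c) (Ioi y) := by
  rw [funext (tailApproxDefect_eq hc)]
  exact (integrableOn_exp_mul_tailApprox_mul hc hy).sub (integrableOn_exp_neg_sq_div_two _)

lemma integral_Ioi_tailApproxDefect (hc : 0 < c) {y : ℝ} (hy : 0 ≤ y) :
    ∫ u in Ioi y, tailApproxDefect c u =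
      exp (-y ^ 2 / 2) * tailApprox c y - ∫ u in Ioi y, exp (-u ^ 2 / 2) := by
  have hint := integrableOn_exp_mul_tailApprox_mul hc hy
  have hderiv := integral_Ioi_of_hasDerivAt_of_tendsto'
    (fun u _ => hasDerivAt_neg_exp_mul_tailApprox hc u) hint
    (tendsto_neg_exp_mul_tailApprox_atTop c)
  rw [funext (tailApproxDefect_eq hc), integral_sub hint (integrableOn_exp_neg_sq_div_two _),
    hderiv, zero_sub, neg_neg]

lemma sq_mul_sqrt_sub_sq (hc : 0 ≤ c) (u : ℝ) :
    (u * √(u ^ 2 + c)) ^ 2 - (u ^ 2 + c - 2) ^ 2 = (4 - c) * u ^ 2 - (c - 2) ^ 2 := by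
  linear_combination u ^ 2 * sq_sqrt_sq_add hc u

lemma tailApproxDefect_neg (hc : 2 ≤ c) {u : ℝ} (hu : 0 ≤ u)
    (h : (4 - c) * u ^ 2 < (c - 2) ^ 2) : tailApproxDefect c u < 0 := by
  have hc0 : 0 < c := by linarith
  have hnum : u * √(u ^ 2 + c) < u ^ 2 + c - 2 :=
    (sq_lt_sq₀ (by positivity) (by nlinarith)).1 (by linarith [sq_mul_sqrt_sub_sq hc0.le u])
  unfold tailApproxDefect
  exact div_neg_of_neg_of_pos (mul_neg_of_pos_of_neg (exp_pos _) (by linarith))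
    (mul_pos (sqrt_sq_add_pos hc0 u) (add_sqrt_sq_add_pos hc0 u))

lemma tailApproxDefect_nonpos (hc : 2 ≤ c) {u : ℝ} (hu : 0 ≤ u)
    (h : (4 - c) * u ^ 2 ≤ (c - 2) ^ 2) : tailApproxDefect c u ≤ 0 := by
  have hc0 : 0 < c := by linarith
  have hnum : u * √(u ^ 2 + c) ≤ u ^ 2 + c - 2 :=
    (sq_le_sq₀ (by positivity) (by nlinarith)).1 (by linarith [sq_mul_sqrt_sub_sq hc0.le u])
  unfold tailApproxDefect
  exact div_nonpos_of_nonpos_of_nonneg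
    (mul_nonpos_of_nonneg_of_nonpos (exp_pos _).le (by linarith)) (by positivity)

lemma tailApproxDefect_nonneg (hc : 2 ≤ c) {u : ℝ} (hu : 0 ≤ u)
    (h : (c - 2) ^ 2 ≤ (4 - c) * u ^ 2) : 0 ≤ tailApproxDefect c u := by
  have hc0 : 0 < c := by linarith
  have hnum : u ^ 2 + c - 2 ≤ u * √(u ^ 2 + c) :=
    (sq_le_sq₀ (by nlinarith) (by positivity)).1 (by linarith [sq_mul_sqrt_sub_sq hc0.le u])
  unfold tailApproxDefect
  exact div_nonneg (mul_nonneg (exp_pos _).le (by linarith)) (by positivity)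

lemma tailApproxDefect_sign_change (hc2 : 2 ≤ c) (hc4 : c < 4) :
    ∃ a, (∀ u ∈ Ioc 0 a, tailApproxDefect c u ≤ 0) ∧ ∀ u ∈ Ioi a, 0 ≤ tailApproxDefect c u := by
  set a := (c - 2) / √(4 - c)
  have ha0 : 0 ≤ a := div_nonneg (by linarith) (sqrt_nonneg _)
  have ha : (4 - c) * a ^ 2 = (c - 2) ^ 2 := by
    rw [div_pow, sq_sqrt (by linarith), mul_div_cancel₀ _ (by linarith)]
  refine ⟨a, fun u hu => tailApproxDefect_nonpos hc2 hu.1.le ?_,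
    fun u hu => tailApproxDefect_nonneg hc2 (ha0.trans hu.out.le) ?_⟩
  · rw [← ha]
    gcongr
    exacts [hu.1.le, hu.2]
  · rw [← ha]
    gcongr
    exact hu.out.le

end TailApprox

lemma sqrt_two_div_pi : √(2 / π) = 2 * (√(2 * π))⁻¹ := by
  rw [eq_mul_inv_iff_mul_eq₀ (sqrt_pos.2 (by positivity)).ne', ← sqrt_mul (by positivity),
    show 2 / π * (2 * π) = 2 ^ 2 by field_simp, sqrt_sq zero_le_two]

lemma inv_sqrt_two_mul_pi_mul_tailApprox (c y a : ℝ) :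
    (√(2 * π))⁻¹ * (a * tailApprox c y) = √(2 / π) * a / (y + √(y ^ 2 + c)) := by
  rw [sqrt_two_div_pi, tailApprox]
  ring

lemma tailApprox_eight_div_pi_zero : tailApprox (8 / π) 0 = √(2 * π) / 2 := by
  have hs : 0 < √(8 / π) := sqrt_pos.2 (by positivity)
  rw [tailApprox, zero_pow two_ne_zero, zero_add, zero_add, div_eq_div_iff hs.ne' two_ne_zero,
    ← sqrt_mul (by positivity), show 2 * π * (8 / π) = 4 ^ 2 by field_simp; ring,
    sqrt_sq (by norm_num)]
  norm_num

lemma exp_mul_tailApprox_four_lt_integral {y : ℝ} (hy : 0 ≤ y) :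
    exp (-y ^ 2 / 2) * tailApprox 4 y < ∫ u in Ioi y, exp (-u ^ 2 / 2) := by
  have hneg := setIntegral_Ioi_neg (integrableOn_tailApproxDefect four_pos hy)
    fun u hu => tailApproxDefect_neg (by norm_num) (hy.trans hu.out.le) (by norm_num)
  rw [integral_Ioi_tailApproxDefect four_pos hy] at hneg
  linarith

lemma integral_le_exp_mul_tailApprox_eight_div_pi {y : ℝ} (hy : 0 ≤ y) :
    ∫ u in Ioi y, exp (-u ^ 2 / 2) ≤ exp (-y ^ 2 / 2) * tailApprox (8 / π) y := by
  have hc : 0 < 8 / π := by positivity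
  have hc2 : 2 ≤ 8 / π := by rw [le_div_iff₀ pi_pos]; linarith [pi_le_four]
  have hc4 : 8 / π < 4 := by rw [div_lt_iff₀ pi_pos]; linarith [pi_gt_three]
  have hzero : ∫ u in Ioi 0, tailApproxDefect (8 / π) u = 0 := by
    rw [integral_Ioi_tailApproxDefect hc le_rfl, integral_Ioi_zero_exp_neg_sq_div_two,
      tailApprox_eight_div_pi_zero]
    simp
  obtain ⟨a, hneg, hpos⟩ := tailApproxDefect_sign_change hc2 hc4
  have := setIntegral_Ioi_nonneg_of_sign_change (integrableOn_tailApproxDefect hc le_rfl)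
    hzero hneg hpos hy
  rw [integral_Ioi_tailApproxDefect hc hy] at this
  linarith

theorem gaussian_tail_bounds (y : ℝ) (hy : 0 ≤ y) :
    Real.sqrt (2 / Real.pi) * Real.exp (-y ^ 2 / 2) / (y + Real.sqrt (y ^ 2 + 4))
      < (Real.sqrt (2 * Real.pi))⁻¹ * ∫ u in Set.Ioi y, Real.exp (-u ^ 2 / 2) ∧
    (Real.sqrt (2 * Real.pi))⁻¹ * (∫ u in Set.Ioi y, Real.exp (-u ^ 2 / 2))
      ≤ Real.sqrt (2 / Real.pi) * Real.exp (-y ^ 2 / 2) / (y + Real.sqrt (y ^ 2 + 8 / Real.pi)) := by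
  have hnorm : 0 < (√(2 * π))⁻¹ := inv_pos.2 (sqrt_pos.2 (by positivity))
  simp only [← inv_sqrt_two_mul_pi_mul_tailApprox]
  exact ⟨mul_lt_mul_of_pos_left (exp_mul_tailApprox_four_lt_integral hy) hnorm,
    mul_le_mul_of_nonneg_left (integral_le_exp_mul_tailApprox_eight_div_pi hy) hnorm.le⟩
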